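/- arXiv:2409.00799 — 5 statements merged into one kernel-verified Lean document; each statement's English description precedes it below -/
import Mathlib

section
/- Let z₁, …, z_S be distinct complex numbers on the unit circle, h ∈ ℂ^S with all h_s ≠ 0, and y_m = ∑_{s=1}^S h_s z_s^{m-1} for m = 1, …, 2S. Define vectors y_k = (y_{k+1}, …, y_{k+S})ᵀ for k = 0, …, S-1 and the Hankel-type matrix 𝒲 = [y_{S-1}, …, y₀] ∈ ℂ^{S×S}. Then 𝒲 is nonsingular. -/
/-!
Reversing the columns of `𝒲` gives the Hankel matrix `(∑ₛ hₛ zₛ^(i+j))ᵢⱼ = Vᵀ diag(h) V`,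
where `V` is the Vandermonde matrix of the `zₛ`. Distinct nodes make `V` nonsingular and
nonzero gains make `diag(h)` nonsingular.
-/

open Matrix

namespace Matrix

theorem vandermonde_transpose_mul_diagonal_mul_vandermonde {R : Type*} [CommRing R] {n : ℕ}
    (z h : Fin n → R) :
    (vandermonde z)ᵀ * diagonal h * vandermonde z =
      of fun i j : Fin n => ∑ s, h s * z s ^ (i + j : ℕ) := by
  ext i j
  rw [mul_apply]
  simp only [mul_diagonal, transpose_apply, vandermonde_apply, of_apply, pow_add]
  exact Finset.sum_congr rfl fun s _ => by ring

theorem isUnit_hankel_sum_mul_pow_of_injective {K : Type*} [Field K] {n : ℕ} {z h : Fin n → K}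
    (hz : Function.Injective z) (hh : ∀ s, h s ≠ 0) :
    IsUnit (of fun i j : Fin n => ∑ s, h s * z s ^ (i + j : ℕ)) := by
  have hV : (vandermonde z).det ≠ 0 := det_vandermonde_ne_zero_iff.2 hz
  have hD : (diagonal h).det ≠ 0 := by
    rw [det_diagonal]
    exact Finset.prod_ne_zero_iff.2 fun s _ => hh s
  rw [← vandermonde_transpose_mul_diagonal_mul_vandermonde, isUnit_iff_isUnit_det, det_mul,
    det_mul, det_transpose, isUnit_iff_ne_zero]
  exact mul_ne_zero (mul_ne_zero hV hD) hV

end Matrix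

theorem hankel_matrix_nonsingular_general (S : ℕ) (z : Fin S → ℂ)
    (hz : Function.Injective z)
    (h : Fin S → ℂ) (hh : ∀ s, h s ≠ 0) (y : ℕ → ℂ)
    (hy : ∀ m : ℕ, 1 ≤ m → m ≤ 2 * S → y m = ∑ s, h s * z s ^ (m - 1)) :
    IsUnit (Matrix.of fun i j : Fin S => y ((S - 1 - (j : ℕ)) + (i : ℕ) + 1)) := by
  have hreverse : (Matrix.of fun i j : Fin S => y ((S - 1 - (j : ℕ)) + (i : ℕ) + 1)) =
      (of fun i j : Fin S => ∑ s, h s * z s ^ (i + j : ℕ)).submatrix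
        (Equiv.refl _) Fin.revPerm := by
    ext i j
    have hi := i.is_lt
    have hj := j.is_lt
    simp only [of_apply, submatrix_apply, Equiv.refl_apply, Fin.revPerm_apply, Fin.val_rev]
    rw [hy _ (by omega) (by omega)]
    congr! 3
    omega
  rw [hreverse, isUnit_submatrix_equiv]
  exact isUnit_hankel_sum_mul_pow_of_injective hz hh

/-- Nonsingularity of the Hankel-type matrix `𝒲 = [y_{S-1}, …, y₀]` built from
`2S` samples of an exponential sum with distinct unimodular bases and nonzero
gains. Column `j` of `𝒲` is the vector `y_{S-1-j} = (y_{S-j}, …, y_{2S-1-j})`. -/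
theorem hankel_matrix_nonsingular (S : ℕ) (z : Fin S → ℂ)
    (hz : Function.Injective z) (hcirc : ∀ s, ‖z s‖ = 1)
    (h : Fin S → ℂ) (hh : ∀ s, h s ≠ 0) (y : ℕ → ℂ)
    (hy : ∀ m : ℕ, 1 ≤ m → m ≤ 2 * S → y m = ∑ s, h s * z s ^ (m - 1)) :
    IsUnit (Matrix.of fun i j : Fin S => y ((S - 1 - (j : ℕ)) + (i : ℕ) + 1)) :=
  hankel_matrix_nonsingular_general S z hz h hh y hy
end

section
/- Let S ≥ 2, M ≥ 2S. Suppose y ∈ ℂ^M satisfies y = A(ω^r)h^r where ω^r ∈ [0,1)^S has distinct entries and h^r ∈ ℂ^S has all entries nonzero. Then any solution (ω, h) of y = A(ω)h with ω having distinct entries and ‖h‖₀ ≤ S must satisfy ‖h‖₀ = S and, up to permutation, (ω, h) = (ω^r, h^r). In particular, the ℓ0-minimization problem min ‖h‖₀ subject to y = A(ω)h has the true signal as its unique global optimum. -/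
open Complex Finset

private lemma exp_two_pi_inj {a b : ℝ} (ha : a ∈ Set.Ico (0:ℝ) 1) (hb : b ∈ Set.Ico (0:ℝ) 1)
    (h : Complex.exp (-(2 * Real.pi * Complex.I * a)) =
         Complex.exp (-(2 * Real.pi * Complex.I * b))) : a = b := by
  rw [Complex.exp_eq_exp_iff_exists_int] at h
  obtain ⟨n, hn⟩ := h
  have hπ : (Real.pi : ℂ) ≠ 0 := by exact_mod_cast Real.pi_ne_zero
  have key : ((b : ℂ) - a - n) * (2 * Real.pi * Complex.I) = 0 := by linear_combination hn
  have h2 : (2 * (Real.pi : ℂ) * Complex.I) ≠ 0 := by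
    simp [Complex.I_ne_zero, hπ]
  have h3 : (b : ℂ) - a - n = 0 := by
    rcases mul_eq_zero.mp key with h' | h'
    · exact h'
    · exact absurd h' h2
  have h4 : b - a - (n : ℝ) = 0 := by exact_mod_cast h3
  obtain ⟨ha0, ha1⟩ := ha
  obtain ⟨hb0, hb1⟩ := hb
  have hn0 : n = 0 := by
    have l1 : (n : ℝ) < 1 := by linarith
    have l2 : (-1 : ℝ) < n := by linarith
    have : n < 1 := by exact_mod_cast l1
    have : (-1 : ℤ) < n := by exact_mod_cast l2
    omega
  rw [hn0] at h4
  push_cast at h4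
  linarith

/-- Noiseless uniqueness of line spectrum recovery (Theorem 1 of the paper):
if `y = A(ωʳ)hʳ` with `S ≥ 2`, `M ≥ 2S`, distinct frequencies in `[0,1)` and
all gains nonzero, then any solution `(ω, h)` of `y = A(ω)h` with distinct
frequencies and `‖h‖₀ ≤ S` satisfies `‖h‖₀ = S` and equals `(ωʳ, hʳ)` up to a
permutation; i.e. the ℓ0-minimization problem has the true signal as its
unique global optimum. -/
theorem noiseless_l0_uniqueness (M S : ℕ) (hS : 2 ≤ S) (hM : 2 * S ≤ M)
    (ωr : Fin S → ℝ) (hωr_range : ∀ s, ωr s ∈ Set.Ico (0 : ℝ) 1)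
    (hωr_inj : Function.Injective ωr)
    (hr : Fin S → ℂ) (hhr : ∀ s, hr s ≠ 0)
    (y : Fin M → ℂ)
    (hy : y = (Matrix.of fun (m : Fin M) (s : Fin S) =>
      Complex.exp (-(2 * Real.pi * Complex.I * (m : ℕ) * (ωr s : ℂ)))).mulVec hr) :
    ∀ (ω : Fin S → ℝ) (h : Fin S → ℂ),
      (∀ s, ω s ∈ Set.Ico (0 : ℝ) 1) →
      Function.Injective ω →
      (Matrix.of fun (m : Fin M) (s : Fin S) =>
        Complex.exp (-(2 * Real.pi * Complex.I * (m : ℕ) * (ω s : ℂ)))).mulVec h = y →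
      (Finset.univ.filter (fun s => h s ≠ 0)).card ≤ S →
      (Finset.univ.filter (fun s => h s ≠ 0)).card = S ∧
      ∃ σ : Equiv.Perm (Fin S), ∀ s, ω (σ s) = ωr s ∧ h (σ s) = hr s := by
  intro ω h hω_range hω_inj heq _hcard
  classical
  set ez : ℝ → ℂ := fun t => Complex.exp (-(2 * Real.pi * Complex.I * t)) with hez
  set F : Finset ℝ := (Finset.image ω univ) ∪ (Finset.image ωr univ) with hF
  set c : ℝ → ℂ := fun t => (∑ s ∈ univ.filter (fun s => ω s = t), h s)
      - (∑ s ∈ univ.filter (fun s => ωr s = t), hr s) with hc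
  -- every element of F is in [0,1)
  have hFmem : ∀ t ∈ F, t ∈ Set.Ico (0:ℝ) 1 := by
    intro t ht
    rcases Finset.mem_union.mp ht with ht' | ht' <;>
      · obtain ⟨s, _, rfl⟩ := Finset.mem_image.mp ht'
        first | exact hω_range s | exact hωr_range s
  have hcardF : F.card ≤ M := by
    calc F.card ≤ (Finset.image ω univ).card + (Finset.image ωr univ).card :=
          Finset.card_union_le _ _
      _ ≤ S + S := by
          gcongr <;> exact (Finset.card_image_le.trans (by simp))
      _ ≤ M := by omega
  -- the exp power identity
  have hpow : ∀ (t : ℝ) (m : ℕ),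
      Complex.exp (-(2 * Real.pi * Complex.I * (m : ℕ) * (t : ℂ))) = ez t ^ m := by
    intro t m
    rw [hez]
    simp only
    rw [← Complex.exp_nat_mul]
    ring_nf
  -- key vanishing relation
  have key : ∀ m : ℕ, m < M → ∑ t ∈ F, c t * ez t ^ m = 0 := by
    intro m hm
    have hmfin : ((⟨m, hm⟩ : Fin M) : ℕ) = m := rfl
    have heqm : ∑ s, ez (ω s) ^ m * h s = ∑ s, ez (ωr s) ^ m * hr s := by
      have := congrFun heq (⟨m, hm⟩ : Fin M)
      rw [hy] at this
      simpa only [Matrix.mulVec, dotProduct, Matrix.of_apply, hmfin, hpow] using this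
    have h1 : ∑ t ∈ F, (∑ s ∈ univ.filter (fun s => ω s = t), h s) * ez t ^ m
        = ∑ s, ez (ω s) ^ m * h s := by
      rw [← Finset.sum_fiberwise_of_maps_to (g := ω) (t := F)
        (fun s _ => Finset.mem_union_left _ (Finset.mem_image_of_mem _ (mem_univ s)))
        (fun s => ez (ω s) ^ m * h s)]
      refine Finset.sum_congr rfl fun t _ => ?_
      rw [Finset.sum_mul]
      refine Finset.sum_congr rfl fun s hs => ?_
      rw [(Finset.mem_filter.mp hs).2]
      ring
    have h2 : ∑ t ∈ F, (∑ s ∈ univ.filter (fun s => ωr s = t), hr s) * ez t ^ m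
        = ∑ s, ez (ωr s) ^ m * hr s := by
      rw [← Finset.sum_fiberwise_of_maps_to (g := ωr) (t := F)
        (fun s _ => Finset.mem_union_right _ (Finset.mem_image_of_mem _ (mem_univ s)))
        (fun s => ez (ωr s) ^ m * hr s)]
      refine Finset.sum_congr rfl fun t _ => ?_
      rw [Finset.sum_mul]
      refine Finset.sum_congr rfl fun s hs => ?_
      rw [(Finset.mem_filter.mp hs).2]
      ring
    calc ∑ t ∈ F, c t * ez t ^ m
        = ∑ t ∈ F, ((∑ s ∈ univ.filter (fun s => ω s = t), h s) * ez t ^ m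
            - (∑ s ∈ univ.filter (fun s => ωr s = t), hr s) * ez t ^ m) := by
          refine Finset.sum_congr rfl fun t _ => ?_; rw [hc]; ring
      _ = 0 := by rw [Finset.sum_sub_distrib, h1, h2, heqm, sub_self]
  -- Vandermonde: c vanishes on F
  have hczero : ∀ t ∈ F, c t = 0 := by
    set n := F.card with hn
    set e := F.orderIsoOfFin rfl with he
    have hfinj : Function.Injective (fun i : Fin n => ez ((e i : ℝ))) := by
      intro i j hij
      have : (e i : ℝ) = (e j : ℝ) :=
        exp_two_pi_inj (hFmem _ (e i).2) (hFmem _ (e j).2) hij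
      exact e.injective (Subtype.ext this)
    have hvan : (fun i : Fin n => c ((e i : ℝ))) = 0 := by
      apply Matrix.eq_zero_of_forall_pow_sum_mul_pow_eq_zero hfinj
      intro i
      have hiM : (i : ℕ) < M := lt_of_lt_of_le i.2 hcardF
      have := key (i : ℕ) hiM
      rw [← this]
      rw [← Finset.sum_attach F (fun t => c t * ez t ^ (i : ℕ))]
      exact Fintype.sum_equiv e.toEquiv _ _ (fun j => rfl)
    intro t ht
    have := congrFun hvan (e.symm ⟨t, ht⟩)
    simpa using this
  -- existence of matching index for each s
  have exist : ∀ s : Fin S, ∃ s', ω s' = ωr s ∧ h s' = hr s := by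
    intro s
    have hmem : ωr s ∈ F := Finset.mem_union_right _ (Finset.mem_image_of_mem _ (mem_univ s))
    have hcs := hczero _ hmem
    have hrfil : univ.filter (fun s' => ωr s' = ωr s) = {s} := by
      ext x; simp [hωr_inj.eq_iff]
    have hsum : ∑ s' ∈ univ.filter (fun s' => ω s' = ωr s), h s' = hr s := by
      have := hcs
      rw [hc] at this
      simp only at this
      rw [hrfil, Finset.sum_singleton, sub_eq_zero] at this
      exact this
    by_contra hcon
    push_neg at hcon
    have hempty : univ.filter (fun s' => ω s' = ωr s) = ∅ ∨
        ∃ s', univ.filter (fun s' => ω s' = ωr s) = {s'} ∧ ω s' = ωr s := by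
      rcases Finset.eq_empty_or_nonempty (univ.filter (fun s' => ω s' = ωr s)) with hE | ⟨s', hs'⟩
      · exact Or.inl hE
      · refine Or.inr ⟨s', ?_, (Finset.mem_filter.mp hs').2⟩
        ext x
        simp only [Finset.mem_filter, Finset.mem_singleton, mem_univ, true_and]
        constructor
        · intro hx; exact hω_inj (hx.trans (Finset.mem_filter.mp hs').2.symm)
        · intro hx; subst hx; exact (Finset.mem_filter.mp hs').2
    rcases hempty with hE | ⟨s', hsing, hωs'⟩
    · rw [hE, Finset.sum_empty] at hsum
      exact hhr s hsum.symm
    · rw [hsing, Finset.sum_singleton] at hsum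
      exact hcon s' hωs' hsum
  choose σ0 hσ1 hσ2 using exist
  have hσinj : Function.Injective σ0 := by
    intro s1 s2 hs
    apply hωr_inj
    rw [← hσ1 s1, ← hσ1 s2, hs]
  have hσbij : Function.Bijective σ0 := (Finite.injective_iff_bijective).mp hσinj
  refine ⟨?_, ⟨Equiv.ofBijective σ0 hσbij, fun s => ⟨hσ1 s, hσ2 s⟩⟩⟩
  have hall : ∀ s', h s' ≠ 0 := by
    intro s'
    obtain ⟨s, rfl⟩ := hσbij.surjective s'
    rw [hσ2 s]
    exact hhr s
  rw [Finset.filter_true_of_mem (fun s _ => hall s)]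
  simp
end

section
/- Let f(h) = ‖y - Ah‖² + λ∑_n tanh(|h_n|²/ε), and let Q(h | h̃) = ‖y - Ah‖² + λ∑_n tanh(|h̃_n|²/ε) + (λ/ε)∑_n (1 - tanh²(|h̃_n|²/ε))(|h_n|² - |h̃_n|²). Then Q(h | h̃) ≥ f(h) for all h, with equality at h = h̃. Consequently, if h⁺ minimizes Q(· | h̃), then f(h⁺) ≤ f(h̃), i.e., the MM iteration monotonically decreases the objective. -/
/-!
On `[0, ∞)` the function `tanh` is concave (its derivative `1 - tanh²` decreases there), so it lies
below each of its tangent lines. Applied at `|h̃_n|² / ε` to each penalty term, this gives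
`f ≤ Q(· | h̃)` with equality at `h̃`, and then `f h⁺ ≤ Q(h⁺ | h̃) ≤ Q(h̃ | h̃) = f h̃`.
-/

open Finset Set

namespace ConcaveOn

theorem le_add_mul_sub_of_hasDerivAt {S : Set ℝ} {f : ℝ → ℝ} {f' x y : ℝ}
    (hfc : ConcaveOn ℝ S f) (hx : x ∈ S) (hy : y ∈ S) (hf' : HasDerivAt f f' x) :
    f y ≤ f x + f' * (y - x) := by
  rcases lt_trichotomy x y with hxy | rfl | hyx
  · have hslope := hfc.slope_le_of_hasDerivAt hx hy hxy hf'
    rw [slope_def_field, div_le_iff₀ (sub_pos.2 hxy)] at hslope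
    linarith
  · simp
  · have hslope := hfc.le_slope_of_hasDerivAt hy hx hyx hf'
    rw [slope_def_field, le_div_iff₀ (sub_pos.2 hyx)] at hslope
    linarith

end ConcaveOn

namespace Real

theorem hasDerivAt_tanh (x : ℝ) : HasDerivAt tanh (1 - tanh x ^ 2) x := by
  have hcosh := (cosh_pos x).ne'
  have hquot := (hasDerivAt_sinh x).div (hasDerivAt_cosh x) hcosh
  rw [show sinh / cosh = tanh from funext fun y => (tanh_eq_sinh_div_cosh y).symm] at hquot
  refine hquot.congr_deriv ?_
  rw [tanh_eq_sinh_div_cosh]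
  field_simp

theorem monotone_tanh : Monotone tanh :=
  monotone_of_hasDerivAt_nonneg hasDerivAt_tanh fun x => sub_nonneg.2 (tanh_sq_lt_one x).le

theorem tanh_nonneg {x : ℝ} (hx : 0 ≤ x) : 0 ≤ tanh x := by
  simpa only [tanh_zero] using monotone_tanh hx

theorem concaveOn_tanh : ConcaveOn ℝ (Ici 0) tanh := by
  refine AntitoneOn.concaveOn_of_deriv (convex_Ici 0)
    (fun x _ => (hasDerivAt_tanh x).continuousAt.continuousWithinAt)
    (fun x _ => (hasDerivAt_tanh x).differentiableAt.differentiableWithinAt) ?_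
  rw [interior_Ici]
  intro x hx y hy hxy
  simp only [(hasDerivAt_tanh _).deriv]
  have hmono := monotone_tanh hxy
  nlinarith [tanh_nonneg (le_of_lt (mem_Ioi.1 hx))]

theorem tanh_le_tangent {x y : ℝ} (hx : 0 ≤ x) (hy : 0 ≤ y) :
    tanh y ≤ tanh x + (1 - tanh x ^ 2) * (y - x) :=
  concaveOn_tanh.le_add_mul_sub_of_hasDerivAt hx hy (hasDerivAt_tanh x)

end Real

theorem tanh_penalty_le_linearization {ι : Type*} [Fintype ι] {u v : ι → ℝ} {lam ε : ℝ}
    (hu : 0 ≤ u) (hv : 0 ≤ v) (hlam : 0 ≤ lam) (hε : 0 ≤ ε) :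
    lam * ∑ i, Real.tanh (u i / ε)
      ≤ lam * ∑ i, Real.tanh (v i / ε)
        + (lam / ε) * ∑ i, (1 - Real.tanh (v i / ε) ^ 2) * (u i - v i) := by
  have hterm : ∀ i, lam * Real.tanh (u i / ε) ≤ lam * Real.tanh (v i / ε)
      + lam / ε * ((1 - Real.tanh (v i / ε) ^ 2) * (u i - v i)) := fun i => by
    have htangent := Real.tanh_le_tangent (div_nonneg (hv i) hε) (div_nonneg (hu i) hε)
    rw [← sub_div, mul_div_assoc'] at htangent
    calc lam * Real.tanh (u i / ε)
        ≤ lam * (Real.tanh (v i / ε) + (1 - Real.tanh (v i / ε) ^ 2) * (u i - v i) / ε) :=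
          mul_le_mul_of_nonneg_left htangent hlam
      _ = _ := by ring
  simpa only [mul_sum, ← sum_add_distrib] using sum_le_sum fun i _ => hterm i

/-- MM majorization and descent: the surrogate
`Q(h | h̃) = ‖y - Ah‖² + λ∑ tanh(|h̃_n|²/ε) + (λ/ε)∑(1 - tanh²(|h̃_n|²/ε))(|h_n|² - |h̃_n|²)`
majorizes `f(h) = ‖y - Ah‖² + λ∑ tanh(|h_n|²/ε)` with equality at `h = h̃`;
consequently any minimizer of `Q(· | h̃)` does not increase `f`. -/
theorem mm_majorization_descent (M N : ℕ)
    (A : Matrix (Fin M) (Fin N) ℂ) (y : Fin M → ℂ)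
    (lam ε : ℝ) (hlam : 0 < lam) (hε : 0 < ε) :
    let f : (Fin N → ℂ) → ℝ := fun h =>
      (∑ m, ‖y m - A.mulVec h m‖ ^ 2)
        + lam * ∑ n, Real.tanh (‖h n‖ ^ 2 / ε)
    let Q : (Fin N → ℂ) → (Fin N → ℂ) → ℝ := fun h ht =>
      (∑ m, ‖y m - A.mulVec h m‖ ^ 2)
        + lam * ∑ n, Real.tanh (‖ht n‖ ^ 2 / ε)
        + (lam / ε) * ∑ n, (1 - Real.tanh (‖ht n‖ ^ 2 / ε) ^ 2)
            * (‖h n‖ ^ 2 - ‖ht n‖ ^ 2)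
    (∀ h ht : Fin N → ℂ, f h ≤ Q h ht) ∧
    (∀ ht : Fin N → ℂ, Q ht ht = f ht) ∧
    (∀ ht hplus : Fin N → ℂ, (∀ h', Q hplus ht ≤ Q h' ht) → f hplus ≤ f ht) := by
  intro f Q
  have hmajorizes : ∀ h ht, f h ≤ Q h ht := fun h ht => by
    simp only [f, Q, add_assoc]
    exact add_le_add le_rfl (tanh_penalty_le_linearization (fun n => sq_nonneg ‖h n‖)
      (fun n => sq_nonneg ‖ht n‖) hlam.le hε.le)
  have htouches : ∀ ht, Q ht ht = f ht := fun ht => by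
    simp only [f, Q, sub_self, mul_zero, sum_const_zero, add_zero]
  refine ⟨hmajorizes, htouches, fun ht hplus hmin => ?_⟩
  calc f hplus ≤ Q hplus ht := hmajorizes hplus ht
    _ ≤ Q ht ht := hmin ht
    _ = f ht := htouches ht
end

section
/- Let z₁, …, z_S be distinct complex numbers, h ∈ ℂ^S with all h_s ≠ 0. If a vector ρ = (ρ₁, …, ρ_S) ∈ ℂ^S satisfies ∑_{s=0}^S ρ_s y_{m-s} = 0 for all m = S+1, …, 2S with ρ₀ = 1, where y_m = ∑_{l=1}^S h_l z_l^{m-1}, then the polynomial z^S + ρ₁ z^{S-1} + ⋯ + ρ_S vanishes at each z_l, l = 1, …, S; hence it equals ∏_{l=1}^S (z - z_l) and ρ is uniquely determined. -/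
open Polynomial in
lemma prony_key (S : ℕ) (z : Fin S → ℂ) (hz : Function.Injective z)
    (h : Fin S → ℂ) (y : ℕ → ℂ)
    (hy : ∀ m : ℕ, y m = ∑ l, h l * z l ^ (m - 1))
    (ρ : Fin S → ℂ)
    (hrec : ∀ m : ℕ, S + 1 ≤ m → m ≤ 2 * S →
      y m + ∑ s : Fin S, ρ s * y (m - ((s : ℕ) + 1)) = 0) :
    ∀ l, h l * (z l ^ S + ∑ s : Fin S, ρ s * z l ^ (S - 1 - (s : ℕ))) = 0 := by
  have key : (fun l => h l * (z l ^ S + ∑ s : Fin S, ρ s * z l ^ (S - 1 - (s : ℕ)))) = 0 := by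
    apply Matrix.eq_zero_of_forall_pow_sum_mul_pow_eq_zero hz
    intro i
    have hm := hrec (S + 1 + (i : ℕ)) (by omega) (by have := i.isLt; omega)
    rw [hy] at hm
    simp only [hy] at hm
    have e1 : S + 1 + (i : ℕ) - 1 = S + (i : ℕ) := by omega
    rw [e1] at hm
    have e2 : ∀ s : Fin S, S + 1 + (i : ℕ) - ((s : ℕ) + 1) - 1 = (S - 1 - (s : ℕ)) + (i : ℕ) := by
      intro s; have := s.isLt; omega
    simp only [e2] at hm
    calc ∑ l, h l * (z l ^ S + ∑ s : Fin S, ρ s * z l ^ (S - 1 - (s : ℕ))) * z l ^ (i : ℕ)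
        = ∑ l, (h l * z l ^ (S + (i : ℕ))
            + ∑ s : Fin S, ρ s * (h l * z l ^ ((S - 1 - (s : ℕ)) + (i : ℕ)))) := by
          refine Finset.sum_congr rfl fun l _ => ?_
          simp only [pow_add, mul_add, add_mul, Finset.mul_sum, Finset.sum_mul]
          congr 1
          · ring
          · exact Finset.sum_congr rfl fun s _ => by ring
      _ = ∑ l, h l * z l ^ (S + (i : ℕ))
            + ∑ s : Fin S, ρ s * ∑ l, h l * z l ^ ((S - 1 - (s : ℕ)) + (i : ℕ)) := by
          rw [Finset.sum_add_distrib, Finset.sum_comm]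
          simp [Finset.mul_sum]
      _ = 0 := hm
  intro l
  exact congrFun key l

/-- Converse Prony property: if `ρ` (with `ρ₀ = 1` built in) annihilates the
samples `y_m = ∑ h_l z_l^{m-1}` for `m = S+1, …, 2S`, with distinct `z_l` and
all `h_l ≠ 0`, then the polynomial `z^S + ρ₁ z^{S-1} + ⋯ + ρ_S` vanishes at
each `z_l`, hence equals `∏ (z - z_l)`, and `ρ` is uniquely determined. -/
theorem prony_converse (S : ℕ) (z : Fin S → ℂ) (hz : Function.Injective z)
    (h : Fin S → ℂ) (hh : ∀ l, h l ≠ 0) (y : ℕ → ℂ)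
    (hy : ∀ m : ℕ, y m = ∑ l, h l * z l ^ (m - 1))
    (ρ : Fin S → ℂ)
    (hrec : ∀ m : ℕ, S + 1 ≤ m → m ≤ 2 * S →
      y m + ∑ s : Fin S, ρ s * y (m - ((s : ℕ) + 1)) = 0) :
    (∀ l, z l ^ S + ∑ s : Fin S, ρ s * z l ^ (S - 1 - (s : ℕ)) = 0) ∧
    (∀ w : ℂ, w ^ S + ∑ s : Fin S, ρ s * w ^ (S - 1 - (s : ℕ)) = ∏ l, (w - z l)) ∧
    (∀ ρ' : Fin S → ℂ,
      (∀ m : ℕ, S + 1 ≤ m → m ≤ 2 * S →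
        y m + ∑ s : Fin S, ρ' s * y (m - ((s : ℕ) + 1)) = 0) → ρ' = ρ) := by
  classical
  have part1 : ∀ l, z l ^ S + ∑ s : Fin S, ρ s * z l ^ (S - 1 - (s : ℕ)) = 0 := fun l =>
    (mul_eq_zero.mp (prony_key S z hz h y hy ρ hrec l)).resolve_left (hh l)
  refine ⟨part1, ?_, ?_⟩
  · -- polynomial identity
    rcases Nat.eq_zero_or_pos S with hS | hS
    · subst hS; intro w; simp
    · set p : Polynomial ℂ :=
        Polynomial.X ^ S + ∑ s : Fin S, Polynomial.C (ρ s) * Polynomial.X ^ (S - 1 - (s : ℕ))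
        with hp
      set q : Polynomial ℂ := ∏ l, (Polynomial.X - Polynomial.C (z l)) with hqdef
      have hrdeg : (∑ s : Fin S,
          Polynomial.C (ρ s) * Polynomial.X ^ (S - 1 - (s : ℕ))).degree < (S : WithBot ℕ) := by
        apply lt_of_le_of_lt (Polynomial.degree_sum_le _ _)
        rw [Finset.sup_lt_iff (by exact_mod_cast WithBot.bot_lt_coe S)]
        intro s _
        apply lt_of_le_of_lt (Polynomial.degree_C_mul_X_pow_le _ _)
        exact_mod_cast (by have := s.isLt; omega : S - 1 - (s : ℕ) < S)
      have hpm : p.Monic := by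
        rw [hp]; exact Polynomial.monic_X_pow_add hrdeg
      have hpdeg : p.degree = (S : ℕ) := by
        rw [hp, Polynomial.degree_add_eq_left_of_degree_lt (by
          rwa [Polynomial.degree_X_pow]), Polynomial.degree_X_pow]
      have hqm : q.Monic :=
        Polynomial.monic_prod_of_monic _ _ fun l _ => Polynomial.monic_X_sub_C _
      have hqdeg : q.degree = (S : ℕ) := by
        rw [hqdef, Polynomial.degree_prod]
        simp [Polynomial.degree_X_sub_C]
      have hevp : ∀ l, Polynomial.eval (z l) p = 0 := by
        intro l
        rw [hp]
        simp only [Polynomial.eval_add, Polynomial.eval_pow, Polynomial.eval_X,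
          Polynomial.eval_finset_sum, Polynomial.eval_mul, Polynomial.eval_C]
        exact part1 l
      have hevq : ∀ l, Polynomial.eval (z l) q = 0 := by
        intro l
        rw [hqdef, Polynomial.eval_prod]
        exact Finset.prod_eq_zero (Finset.mem_univ l) (by simp)
      have hpq : p = q := by
        rcases eq_or_ne (p - q) 0 with hc | hc
        · exact sub_eq_zero.mp hc
        · exfalso
          apply hc
          apply Polynomial.eq_zero_of_natDegree_lt_card_of_eval_eq_zero (p - q) hz
          · intro l; simp [Polynomial.eval_sub, hevp l, hevq l]
          · rw [Fintype.card_fin]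
            have hdlt : (p - q).degree < (S : ℕ) := by
              rw [← hpdeg]
              exact Polynomial.degree_sub_lt (hpdeg.trans hqdeg.symm) hpm.ne_zero
                (by rw [hpm.leadingCoeff, hqm.leadingCoeff])
            exact (Polynomial.natDegree_lt_iff_degree_lt hc).mpr (by exact_mod_cast hdlt)
      intro w
      have := congrArg (Polynomial.eval w) hpq
      simpa only [hp, hqdef, Polynomial.eval_add, Polynomial.eval_pow, Polynomial.eval_X,
        Polynomial.eval_finset_sum, Polynomial.eval_mul, Polynomial.eval_C,
        Polynomial.eval_prod, Polynomial.eval_sub] using this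
  · -- uniqueness
    intro ρ' hrec'
    have part1' : ∀ l, z l ^ S + ∑ s : Fin S, ρ' s * z l ^ (S - 1 - (s : ℕ)) = 0 := fun l =>
      (mul_eq_zero.mp (prony_key S z hz h y hy ρ' hrec' l)).resolve_left (hh l)
    have hd : ∀ l, ∑ s : Fin S, (ρ' s - ρ s) * z l ^ (S - 1 - (s : ℕ)) = 0 := by
      intro l
      have h1 := part1' l
      have h2 := part1 l
      simp only [sub_mul, Finset.sum_sub_distrib]
      linear_combination h1 - h2
    have hv : (fun j : Fin S => ρ' (Fin.rev j) - ρ (Fin.rev j)) = 0 := by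
      apply Matrix.eq_zero_of_forall_index_sum_mul_pow_eq_zero hz
      intro l
      calc ∑ i : Fin S, (ρ' (Fin.rev i) - ρ (Fin.rev i)) * z l ^ (i : ℕ)
          = ∑ s : Fin S, (ρ' s - ρ s) * z l ^ (S - 1 - (s : ℕ)) := by
            refine Fintype.sum_bijective Fin.rev
              (Function.Involutive.bijective fun i => Fin.rev_rev i) _ _ fun i => ?_
            rw [Fin.val_rev]
            congr 2
            have := i.isLt; omega
        _ = 0 := hd l
    funext s
    have := congrFun hv (Fin.rev s)
    rw [Fin.rev_rev] at this
    exact sub_eq_zero.mp (by simpa using this)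
end

section
/- Let D = diag(z₁, …, z_S) where z₁, …, z_S are distinct points on the complex unit circle, and let h ∈ ℂ^S with all h_s ≠ 0. Then the matrix R_h = (1/S)∑_{s=1}^S D^s h h^H (D^s)^H ∈ ℂ^{S×S} is Hermitian positive definite (in particular has rank S). -/
open scoped ComplexOrder
open Matrix

/-! `R_h = (1/S) A Aᴴ` for the `S × S` matrix `A i s = h_i z_i^(s+1)`, which factors as
`diag(h_i z_i)` times the Vandermonde matrix of the distinct nodes `z_i`; hence `A` is invertible
and `A Aᴴ` is positive definite. -/

namespace Matrix

variable {R : Type*} [CommRing R] {n : ℕ}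

theorem of_mul_pow_succ_eq_diagonal_mul_vandermonde (c v : Fin n → R) :
    of (fun i j : Fin n => c i * v i ^ ((j : ℕ) + 1)) = diagonal (c * v) * vandermonde v := by
  ext i j
  simp only [of_apply, diagonal_mul, vandermonde_apply, Pi.mul_apply, pow_succ']
  ring

theorem isUnit_of_mul_pow_succ {K : Type*} [Field K] {c v : Fin n → K} (hc : ∀ i, c i ≠ 0)
    (hv : ∀ i, v i ≠ 0) (hinj : Function.Injective v) :
    IsUnit (of fun i j : Fin n => c i * v i ^ ((j : ℕ) + 1)) := by
  rw [of_mul_pow_succ_eq_diagonal_mul_vandermonde, isUnit_iff_isUnit_det, det_mul,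
    det_diagonal, isUnit_iff_ne_zero]
  exact mul_ne_zero (Finset.prod_ne_zero_iff.mpr fun i _ => mul_ne_zero (hc i) (hv i))
    (det_vandermonde_ne_zero_iff.mpr hinj)

end Matrix

/-- The matrix `R_h = (1/S) ∑_{s=1}^S D^s h hᴴ (D^s)ᴴ`, with
`D = diag(z₁, …, z_S)` for distinct unimodular `z_l` and all gains `h_l ≠ 0`,
is Hermitian positive definite (in particular of rank `S`). Its `(i,j)` entry
is `(1/S) ∑_{s=1}^S (h_i z_i^s) · conj(h_j z_j^s)`. -/
theorem gram_matrix_posdef (S : ℕ) (z : Fin S → ℂ)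
    (hz : Function.Injective z) (hcirc : ∀ l, ‖z l‖ = 1)
    (h : Fin S → ℂ) (hh : ∀ l, h l ≠ 0) :
    (Matrix.of fun i j : Fin S =>
      (1 / (S : ℂ)) * ∑ s ∈ Finset.range S,
        (h i * z i ^ (s + 1)) * (starRingEnd ℂ) (h j * z j ^ (s + 1))).PosDef := by
  obtain rfl | hS := S.eq_zero_or_pos
  · exact ⟨Subsingleton.elim _ _, fun x hx => absurd (Subsingleton.elim x 0) hx⟩
  set A := of fun i s : Fin S => h i * z i ^ ((s : ℕ) + 1)
  have hz0 : ∀ l, z l ≠ 0 := fun l h0 => by simpa [h0] using hcirc l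
  have hA : IsUnit A := isUnit_of_mul_pow_succ hh hz0 hz
  have hR : (of fun i j : Fin S => (1 / (S : ℂ)) * ∑ s ∈ Finset.range S,
      (h i * z i ^ (s + 1)) * (starRingEnd ℂ) (h j * z j ^ (s + 1))) =
      (1 / (S : ℂ)) • (A * Aᴴ) := by
    ext i j
    simp only [of_apply, Matrix.smul_apply, mul_apply, conjTranspose_apply, smul_eq_mul, A,
      ← Fin.sum_univ_eq_sum_range]
    rfl
  rw [hR]
  exact (PosDef.mul_conjTranspose_self A (vecMul_injective_of_isUnit hA)).smul
    (one_div_pos.mpr (Nat.cast_pos.mpr hS))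
end
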